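/- arXiv:1808.06647 — 2 statements merged into one kernel-verified Lean document; each statement's English description precedes it below -/
import Mathlib

section
/- For r ∈ (0,1), the closed hyperbolic disc in the strip S with hyperbolic center 0 and hyperbolic radius λ(r) = ln((1+r)/(1-r)) is contained in the Euclidean rectangle [-(4/π)arctan r, (4/π)arctan r] × [-(2/π)λ(r), (2/π)λ(r)]. -/
open Complex Set

/-- The strip `S = {z : -1 < Re z < 1}`. -/
def stripS : Set ℂ := {z : ℂ | -1 < z.re ∧ z.re < 1}

/-- The unit disc. -/
def discU : Set ℂ := {z : ℂ | ‖z‖ < 1}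

/-- Hyperbolic density of the strip. -/
noncomputable def rhoS (z : ℂ) : ℝ := (Real.pi / 2) / Real.cos (Real.pi / 2 * z.re)

/-- Hyperbolic density of the unit disc. -/
noncomputable def rhoU (z : ℂ) : ℝ := 2 / (1 - ‖z‖ ^ 2)

/-- Hyperbolic length of a curve in the strip. -/
noncomputable def hypLenS (γ : ℝ → ℂ) : ℝ := ∫ t in (0:ℝ)..1, rhoS (γ t) * ‖deriv γ t‖

/-- Hyperbolic length of a curve in the disc. -/
noncomputable def hypLenU (γ : ℝ → ℂ) : ℝ := ∫ t in (0:ℝ)..1, rhoU (γ t) * ‖deriv γ t‖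

/-- Hyperbolic distance on the strip: infimum of hyperbolic lengths of C¹ curves. -/
noncomputable def dS (z₁ z₂ : ℂ) : ℝ :=
  sInf { L : ℝ | ∃ γ : ℝ → ℂ, ContDiffOn ℝ 1 γ (Icc 0 1) ∧ γ 0 = z₁ ∧ γ 1 = z₂ ∧
    (∀ t ∈ Icc (0:ℝ) 1, γ t ∈ stripS) ∧ L = hypLenS γ }

/-- Hyperbolic distance on the unit disc. -/
noncomputable def dU (z₁ z₂ : ℂ) : ℝ :=
  sInf { L : ℝ | ∃ γ : ℝ → ℂ, ContDiffOn ℝ 1 γ (Icc 0 1) ∧ γ 0 = z₁ ∧ γ 1 = z₂ ∧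
    (∀ t ∈ Icc (0:ℝ) 1, γ t ∈ discU) ∧ L = hypLenU γ }

/-- The conformal map of the disc onto the strip, inverse of `z ↦ tan (π z / 4)`. -/
noncomputable def phiUS (z : ℂ) : ℂ :=
  (-(2 * Complex.I) / (Real.pi : ℂ)) * Complex.log ((1 + Complex.I * z) / (1 - Complex.I * z))

/-- Inverse hyperbolic tangent. -/
noncomputable def artanh (r : ℝ) : ℝ := Real.log ((1 + r) / (1 - r)) / 2

/-- A real-valued function is harmonic on a set. -/
def HarmonicOnR (u : ℂ → ℝ) (s : Set ℂ) : Prop :=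
  ContDiffOn ℝ 2 u s ∧ ∀ z ∈ s,
    fderiv ℝ (fun w => fderiv ℝ u w 1) z 1 + fderiv ℝ (fun w => fderiv ℝ u w Complex.I) z Complex.I = 0

/-- A complex-valued function is harmonic on a set. -/
def HarmonicOnC (f : ℂ → ℂ) (s : Set ℂ) : Prop :=
  ContDiffOn ℝ 2 f s ∧ ∀ z ∈ s,
    fderiv ℝ (fun w => fderiv ℝ f w 1) z 1 + fderiv ℝ (fun w => fderiv ℝ f w Complex.I) z Complex.I = 0

/-- Wirtinger derivative ∂f/∂z. -/
noncomputable def wderiv (f : ℂ → ℂ) (z : ℂ) : ℂ :=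
  (fderiv ℝ f z 1 - Complex.I * fderiv ℝ f z Complex.I) / 2

/-- Wirtinger derivative ∂f/∂z̄. -/
noncomputable def wderivBar (f : ℂ → ℂ) (z : ℂ) : ℂ :=
  (fderiv ℝ f z 1 + Complex.I * fderiv ℝ f z Complex.I) / 2

/-- Sense-preserving K-quasiregular C¹ map on a set. -/
def QRegOn (K : ℝ) (f : ℂ → ℂ) (s : Set ℂ) : Prop :=
  ContDiffOn ℝ 1 f s ∧ ∀ z ∈ s,
    ‖wderivBar f z‖ < ‖wderiv f z‖ ∧
    ‖wderiv f z‖ + ‖wderivBar f z‖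
      ≤ K * (‖wderiv f z‖ - ‖wderivBar f z‖)

/-! A function on the strip whose gradient is bounded by the density `ρ_S` changes along any
curve by at most the hyperbolic length of the curve, so it is `1`-Lipschitz for `d_S`. Two such
functions are `(π/2) Im z` and `F (Re z)`, where `F x = 2 artanh (tan (π x / 4))` is the
hyperbolic distance from `0` to `x` along the real axis (`F' = ρ_S`). Hence
`(π/2) |Im z| ≤ d_S(z, 0)` and `|F (Re z)| ≤ d_S(z, 0)`; since `F` is odd and increasing with
`F ((4/π) arctan r) = λ(r)`, the rectangle bounds follow. -/

open scoped Real
open MeasureTheory intervalIntegral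

lemma convex_stripS : Convex ℝ stripS :=
  (convex_Ioo (-1 : ℝ) 1).linear_preimage Complex.reLm

lemma cos_pi_div_two_mul_pos {x : ℝ} (hx : x ∈ Ioo (-1 : ℝ) 1) : 0 < Real.cos (π / 2 * x) :=
  Real.cos_pos_of_mem_Ioo ⟨by nlinarith [Real.pi_pos, hx.1], by nlinarith [Real.pi_pos, hx.2]⟩

lemma cos_pi_div_two_mul_re_pos {z : ℂ} (hz : z ∈ stripS) : 0 < Real.cos (π / 2 * z.re) :=
  cos_pi_div_two_mul_pos ⟨hz.1, hz.2⟩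

lemma pi_div_two_le_rhoS {z : ℂ} (hz : z ∈ stripS) : π / 2 ≤ rhoS z :=
  le_div_self (by positivity) (cos_pi_div_two_mul_re_pos hz) (Real.cos_le_one _)

lemma continuousOn_rhoS : ContinuousOn rhoS stripS :=
  continuousOn_const.div (by fun_prop) fun _ hz => (cos_pi_div_two_mul_re_pos hz).ne'

section Potential

variable {f : ℂ → ℝ} {f' : ℂ → ℂ →L[ℝ] ℝ}

lemma abs_sub_le_hypLenS (hf : ∀ z ∈ stripS, HasFDerivAt f (f' z) z)
    (hf' : ∀ z ∈ stripS, ‖f' z‖ ≤ rhoS z) {γ : ℝ → ℂ} (hγ : ContDiffOn ℝ 1 γ (Icc 0 1))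
    (hγS : ∀ t ∈ Icc (0 : ℝ) 1, γ t ∈ stripS) :
    |f (γ 1) - f (γ 0)| ≤ hypLenS γ := by
  have hγ' : ∀ t ∈ Ioo (0 : ℝ) 1, HasDerivAt γ (deriv γ t) t := fun t ht =>
    ((hγ.differentiableOn one_ne_zero t (Ioo_subset_Icc_self ht)).differentiableAt
      (Icc_mem_nhds ht.1 ht.2)).hasDerivAt
  have hcomp : ∀ t ∈ Ioo (0 : ℝ) 1, HasDerivAt (f ∘ γ) (f' (γ t) (deriv γ t)) t := fun t ht =>
    (hf _ (hγS t (Ioo_subset_Icc_self ht))).comp_hasDerivAt t (hγ' t ht)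
  have hfc : ContinuousOn f stripS := fun z hz => (hf z hz).continuousAt.continuousWithinAt
  have hcont : ContinuousOn (f ∘ γ) (Icc 0 1) := hfc.comp hγ.continuousOn hγS
  have hbound : ∀ t ∈ Ioo (0 : ℝ) 1, |f' (γ t) (deriv γ t)| ≤ rhoS (γ t) * ‖deriv γ t‖ :=
    fun t ht => ((f' (γ t)).le_opNorm _).trans
      (mul_le_mul_of_nonneg_right (hf' _ (hγS t (Ioo_subset_Icc_self ht))) (norm_nonneg _))
  have hint : IntegrableOn (fun t => rhoS (γ t) * ‖deriv γ t‖) (Icc 0 1) := by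
    have hcont' : ContinuousOn (fun t => rhoS (γ t) * ‖derivWithin γ (Icc 0 1) t‖) (Icc 0 1) :=
      (continuousOn_rhoS.comp hγ.continuousOn hγS).mul
        (hγ.continuousOn_derivWithin (uniqueDiffOn_Icc one_pos) le_rfl).norm
    refine (integrableOn_Icc_iff_integrableOn_Ioo).mpr
      (((hcont'.integrableOn_Icc).mono_set Ioo_subset_Icc_self).congr_fun
        (fun t ht => ?_) measurableSet_Ioo)
    simp only [derivWithin_of_mem_nhds (Icc_mem_nhds ht.1 ht.2)]
  rw [abs_le]
  constructor
  · have := sub_le_integral_of_hasDeriv_right_of_le zero_le_one hcont.neg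
      (fun t ht => (hcomp t ht).neg.hasDerivWithinAt) hint
      (fun t ht => (neg_le_abs _).trans (hbound t ht))
    simp only [Pi.neg_apply, Function.comp_apply] at this
    rw [hypLenS]
    linarith
  · exact sub_le_integral_of_hasDeriv_right_of_le zero_le_one hcont
      (fun t ht => (hcomp t ht).hasDerivWithinAt) hint
      (fun t ht => (le_abs_self _).trans (hbound t ht))

lemma abs_sub_le_dS (hf : ∀ z ∈ stripS, HasFDerivAt f (f' z) z)
    (hf' : ∀ z ∈ stripS, ‖f' z‖ ≤ rhoS z) {z₁ z₂ : ℂ} (h₁ : z₁ ∈ stripS) (h₂ : z₂ ∈ stripS) :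
    |f z₁ - f z₂| ≤ dS z₁ z₂ := by
  refine le_csInf ⟨_, fun t : ℝ => z₁ + t • (z₂ - z₁), by fun_prop, by simp, by simp,
    fun t ht => convex_stripS.add_smul_sub_mem h₁ h₂ ht, rfl⟩ ?_
  rintro _ ⟨γ, hγ, rfl, rfl, hγS, rfl⟩
  rw [abs_sub_comm]
  exact abs_sub_le_hypLenS hf hf' hγ hγS

end Potential

lemma Real.artanh_neg_eq_neg (x : ℝ) : Real.artanh (-x) = -Real.artanh x := by
  rw [Real.artanh, Real.artanh, ← sub_eq_add_neg, sub_neg_eq_add, ← inv_div, Real.sqrt_inv,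
    Real.log_inv]

lemma Real.hasDerivAt_artanh {x : ℝ} (hx : x ∈ Ioo (-1 : ℝ) 1) :
    HasDerivAt Real.artanh (1 / (1 - x ^ 2)) x := by
  have h₁ : 0 < 1 + x := by linarith [hx.1]
  have h₂ : 0 < 1 - x := by linarith [hx.2]
  have h₃ : 1 - x ^ 2 ≠ 0 := by nlinarith
  have hlog := ((((hasDerivAt_id x).const_add 1).div ((hasDerivAt_id x).const_sub 1)
    h₂.ne').log (div_pos h₁ h₂).ne').const_mul (1 / 2 : ℝ)
  refine (hlog.congr_of_eventuallyEq ?_).congr_deriv ?_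
  · filter_upwards [isOpen_Ioo.mem_nhds hx] with y hy
    exact Real.artanh_eq_half_log (Ioo_subset_Icc_self hy)
  · simp only [id, Pi.div_apply]
    field_simp
    ring

lemma pi_div_four_mul_mem_Ioo {x : ℝ} (hx : x ∈ Icc (-1 : ℝ) 1) :
    π / 4 * x ∈ Ioo (-(π / 2)) (π / 2) :=
  ⟨by nlinarith [Real.pi_pos, hx.1], by nlinarith [Real.pi_pos, hx.2]⟩

lemma strictMonoOn_tan_pi_div_four_mul :
    StrictMonoOn (fun x => Real.tan (π / 4 * x)) (Icc (-1) 1) :=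
  fun _ hx _ hy hxy => Real.strictMonoOn_tan (pi_div_four_mul_mem_Ioo hx)
    (pi_div_four_mul_mem_Ioo hy) (mul_lt_mul_of_pos_left hxy (by positivity))

lemma tan_pi_div_four_mul_mem_Ioo {x : ℝ} (hx : x ∈ Ioo (-1 : ℝ) 1) :
    Real.tan (π / 4 * x) ∈ Ioo (-1 : ℝ) 1 := by
  have h := strictMonoOn_tan_pi_div_four_mul
  simpa [Real.tan_neg] using
    And.intro (h (left_mem_Icc.mpr (by norm_num)) (Ioo_subset_Icc_self hx) hx.1)
      (h (Ioo_subset_Icc_self hx) (right_mem_Icc.mpr (by norm_num)) hx.2)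

noncomputable def stripPotential (x : ℝ) : ℝ := 2 * Real.artanh (Real.tan (π / 4 * x))

lemma strictMonoOn_stripPotential : StrictMonoOn stripPotential (Ioo (-1) 1) :=
  fun _ hx _ hy hxy => mul_lt_mul_of_pos_left
    (Real.strictMonoOn_artanh (tan_pi_div_four_mul_mem_Ioo hx) (tan_pi_div_four_mul_mem_Ioo hy)
      (strictMonoOn_tan_pi_div_four_mul (Ioo_subset_Icc_self hx) (Ioo_subset_Icc_self hy)
        hxy)) two_pos

lemma stripPotential_neg (x : ℝ) : stripPotential (-x) = -stripPotential x := by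
  rw [stripPotential, stripPotential, mul_neg, Real.tan_neg, Real.artanh_neg_eq_neg, mul_neg]

lemma stripPotential_pi_div_four_mul_arctan (r : ℝ) :
    stripPotential (4 / π * Real.arctan r) = 2 * Real.artanh r := by
  have h : π / 4 * (4 / π) = 1 := by field_simp
  rw [stripPotential, ← mul_assoc, h, one_mul, Real.tan_arctan]

lemma hasDerivAt_stripPotential {x : ℝ} (hx : x ∈ Ioo (-1 : ℝ) 1) :
    HasDerivAt stripPotential (π / 2 / Real.cos (π / 2 * x)) x := by
  set u := π / 4 * x with hu
  have hcos : 0 < Real.cos u :=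
    Real.cos_pos_of_mem_Ioo (pi_div_four_mul_mem_Ioo (Ioo_subset_Icc_self hx))
  have htan := (Real.hasDerivAt_tan hcos.ne').comp x ((hasDerivAt_id x).const_mul (π / 4))
  have := ((Real.hasDerivAt_artanh (tan_pi_div_four_mul_mem_Ioo hx)).comp x htan).const_mul 2
  refine this.congr_deriv ?_
  have hcos2 : Real.cos (π / 2 * x) = 2 * Real.cos u ^ 2 - 1 := by
    rw [← Real.cos_two_mul, hu]
    ring_nf
  have hcos2_pos : 0 < 2 * Real.cos u ^ 2 - 1 := hcos2 ▸ cos_pi_div_two_mul_pos hx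
  have hden : 1 - (1 - Real.cos u ^ 2) / Real.cos u ^ 2 =
      (2 * Real.cos u ^ 2 - 1) / Real.cos u ^ 2 := by
    field_simp
    ring
  rw [hcos2, ← hu, Real.tan_eq_sin_div_cos, div_pow, Real.sin_sq, hden]
  field_simp
  ring

lemma four_div_pi_mul_arctan_mem_Ioo {r : ℝ} (hr : r ∈ Ioo (-1 : ℝ) 1) :
    4 / π * Real.arctan r ∈ Ioo (-1 : ℝ) 1 := by
  have h₁ : -(π / 4) < Real.arctan r := by
    simpa [Real.arctan_neg, Real.arctan_one] using Real.arctan_strictMono hr.1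
  have h₂ : Real.arctan r < π / 4 := Real.arctan_one ▸ Real.arctan_strictMono hr.2
  constructor
  · rw [div_mul_eq_mul_div, lt_div_iff₀ Real.pi_pos]
    linarith
  · rw [div_mul_eq_mul_div, div_lt_iff₀ Real.pi_pos]
    linarith

lemma abs_le_of_abs_stripPotential_le {x r : ℝ} (hx : x ∈ Ioo (-1 : ℝ) 1)
    (hr : r ∈ Ioo (-1 : ℝ) 1) (h : |stripPotential x| ≤ 2 * Real.artanh r) :
    |x| ≤ 4 / π * Real.arctan r := by
  have ha := four_div_pi_mul_arctan_mem_Ioo hr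
  have ha' : -(4 / π * Real.arctan r) ∈ Ioo (-1 : ℝ) 1 := ⟨by linarith [ha.2], by linarith [ha.1]⟩
  rw [← stripPotential_pi_div_four_mul_arctan] at h
  rw [abs_le] at h ⊢
  exact ⟨(strictMonoOn_stripPotential.le_iff_le ha' hx).mp (by rw [stripPotential_neg]; exact h.1),
    (strictMonoOn_stripPotential.le_iff_le hx ha).mp h.2⟩

lemma abs_stripPotential_re_le_dS {z : ℂ} (hz : z ∈ stripS) : |stripPotential z.re| ≤ dS z 0 := by
  have hf : ∀ w ∈ stripS, HasFDerivAt (fun w : ℂ => stripPotential w.re)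
      ((π / 2 / Real.cos (π / 2 * w.re)) • Complex.reCLM) w := fun w hw =>
    (hasDerivAt_stripPotential ⟨hw.1, hw.2⟩).comp_hasFDerivAt w Complex.reCLM.hasFDerivAt
  have hf' : ∀ w ∈ stripS, ‖(π / 2 / Real.cos (π / 2 * w.re)) • Complex.reCLM‖ ≤ rhoS w :=
    fun w hw => by
      rw [norm_smul, Complex.reCLM_norm, mul_one, Real.norm_eq_abs,
        abs_of_pos (div_pos Real.pi_div_two_pos (cos_pi_div_two_mul_re_pos hw))]
      exact le_rfl
  simpa [stripPotential] using abs_sub_le_dS hf hf' hz (show (0 : ℂ) ∈ stripS by norm_num [stripS])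

lemma pi_div_two_mul_abs_im_le_dS {z : ℂ} (hz : z ∈ stripS) : π / 2 * |z.im| ≤ dS z 0 := by
  have hf : ∀ w ∈ stripS, HasFDerivAt (fun w : ℂ => π / 2 * w.im) ((π / 2) • Complex.imCLM) w :=
    fun w _ => Complex.imCLM.hasFDerivAt.const_mul (π / 2)
  have hf' : ∀ w ∈ stripS, ‖(π / 2) • Complex.imCLM‖ ≤ rhoS w := fun w hw => by
    rw [norm_smul, Complex.imCLM_norm, mul_one, Real.norm_eq_abs, abs_of_pos (by positivity)]
    exact pi_div_two_le_rhoS hw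
  simpa [abs_mul, abs_of_pos Real.pi_div_two_pos] using
    abs_sub_le_dS hf hf' hz (show (0 : ℂ) ∈ stripS by norm_num [stripS])

/-- the closed hyperbolic disc of radius `λ(r) = ln((1+r)/(1-r))`
centered at `0` in the strip is contained in the rectangle
`[-(4/π)arctan r, (4/π)arctan r] × [-(2/π)λ(r), (2/π)λ(r)]`. -/
theorem hyperbolic_disc_subset_rectangle (r : ℝ) (hr : r ∈ Set.Ioo (0:ℝ) 1) :
    ∀ z ∈ stripS, dS z 0 ≤ Real.log ((1 + r) / (1 - r)) →
      |z.re| ≤ (4 / Real.pi) * Real.arctan r ∧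
      |z.im| ≤ (2 / Real.pi) * Real.log ((1 + r) / (1 - r)) := by
  intro z hz hd
  have hr' : r ∈ Ioo (-1 : ℝ) 1 := ⟨by linarith [hr.1], hr.2⟩
  have hlog : Real.log ((1 + r) / (1 - r)) = 2 * Real.artanh r := by
    rw [Real.artanh_eq_half_log (Ioo_subset_Icc_self hr')]
    ring
  constructor
  · exact abs_le_of_abs_stripPotential_le ⟨hz.1, hz.2⟩ hr'
      ((abs_stripPotential_re_le_dS hz).trans (hd.trans hlog.le))
  · have him := (pi_div_two_mul_abs_im_le_dS hz).trans hd
    calc |z.im| = 2 / π * (π / 2 * |z.im|) := by field_simp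
      _ ≤ 2 / π * Real.log ((1 + r) / (1 - r)) := by gcongr
end

section
/- The inequality |u(z)| ≤ (4/π)·arctan|z| for harmonic u : U → (-1,1) with u(0)=0 is sharp: for each z ∈ U with z ≠ 0 there exists a harmonic function û : U → (-1,1) with û(0) = 0 and |û(z)| = (4/π)·arctan|z|. -/
open Complex Set

lemma discU_isOpen : IsOpen discU := by
  have : discU = Metric.ball (0:ℂ) 1 := by
    ext w; simp [discU, Metric.mem_ball, Complex.dist_eq]
  rw [this]; exact Metric.isOpen_ball

lemma fderiv_re_comp {g : ℂ → ℂ} {z : ℂ} (hg : DifferentiableAt ℂ g z) (v : ℂ) :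
    fderiv ℝ (fun w => (g w).re) z v = (deriv g z * v).re := by
  have hR : HasFDerivAt g ((fderiv ℂ g z).restrictScalars ℝ) z :=
    (hg.hasFDerivAt).restrictScalars ℝ
  have h1 : HasFDerivAt (fun w => (g w).re)
      (Complex.reCLM.comp ((fderiv ℂ g z).restrictScalars ℝ)) z :=
    (Complex.reCLM.hasFDerivAt).comp z hR
  rw [h1.fderiv]
  have h2 : fderiv ℂ g z v = deriv g z * v := by
    calc fderiv ℂ g z v = fderiv ℂ g z (v • 1) := by simp
      _ = v • fderiv ℂ g z 1 := (fderiv ℂ g z).map_smul v 1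
      _ = deriv g z * v := by rw [fderiv_apply_one_eq_deriv]; simp [mul_comm]
  simp [h2]

lemma harmonic_re {f : ℂ → ℂ} (hf : DifferentiableOn ℂ f discU) :
    HarmonicOnR (fun w => (f w).re) discU := by
  have hO := discU_isOpen
  have hA : AnalyticOnNhd ℂ f discU := hf.analyticOnNhd hO
  have hA' : AnalyticOnNhd ℂ (deriv f) discU := hA.deriv
  have hA'' : AnalyticOnNhd ℂ (deriv (deriv f)) discU := hA'.deriv
  constructor
  · have h2 : ContDiffOn ℝ 2 f discU := (hf.contDiffOn hO).restrict_scalars ℝ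
    exact (Complex.reCLM.contDiff.comp_contDiffOn h2 : )
  · intro z hz
    have hz' : DifferentiableAt ℂ f z := (hA z hz).differentiableAt
    have hd' : DifferentiableAt ℂ (deriv f) z := (hA' z hz).differentiableAt
    -- first term
    have e1 : (fun w => fderiv ℝ (fun w => (f w).re) w 1) =ᶠ[nhds z]
        (fun w => (deriv f w).re) := by
      filter_upwards [hO.mem_nhds hz] with w hw
      rw [fderiv_re_comp ((hA w hw).differentiableAt) 1, mul_one]
    have e2 : (fun w => fderiv ℝ (fun w => (f w).re) w Complex.I) =ᶠ[nhds z]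
        (fun w => (deriv f w * Complex.I).re) := by
      filter_upwards [hO.mem_nhds hz] with w hw
      exact fderiv_re_comp ((hA w hw).differentiableAt) Complex.I
    rw [e1.fderiv_eq, e2.fderiv_eq]
    have t1 : fderiv ℝ (fun w => (deriv f w).re) z 1 = (deriv (deriv f) z * 1).re :=
      fderiv_re_comp hd' 1
    have t2 : fderiv ℝ (fun w => (deriv f w * Complex.I).re) z Complex.I
        = (deriv (fun w => deriv f w * Complex.I) z * Complex.I).re :=
      fderiv_re_comp (hd'.mul_const _) Complex.I
    rw [t1, t2, deriv_mul_const hd']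
    have : deriv (deriv f) z * Complex.I * Complex.I = - (deriv (deriv f) z) := by
      rw [mul_assoc, Complex.I_mul_I]; ring
    rw [this]
    simp



lemma denom_ne_zero {v : ℂ} (hv : ‖v‖ < 1) : 1 - Complex.I * v ≠ 0 := by
  intro h
  have : ‖Complex.I * v‖ = 1 := by
    rw [show Complex.I * v = 1 by linear_combination -h]; simp
  simp [norm_mul] at this
  linarith

lemma re_q_pos {v : ℂ} (hv : ‖v‖ < 1) :
    0 < ((1 + Complex.I * v) / (1 - Complex.I * v)).re := by
  have hns : Complex.normSq v < 1 := by
    have h := Complex.sq_norm v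
    nlinarith [norm_nonneg v]
  have hd : (0:ℝ) < Complex.normSq (1 - Complex.I * v) :=
    Complex.normSq_pos.mpr (denom_ne_zero hv)
  rw [Complex.div_re]
  rw [Complex.normSq_apply] at hns ⊢
  simp only [Complex.add_re, Complex.add_im, Complex.one_re, Complex.one_im,
    Complex.sub_re, Complex.sub_im, Complex.mul_re, Complex.mul_im,
    Complex.I_re, Complex.I_im] at *
  have h1 : 0 < (1 - (0 * v.re - 1 * v.im)) * (1 - (0 * v.re - 1 * v.im)) +
      (0 * v.im + 1 * v.re) * (0 * v.im + 1 * v.re) := by nlinarith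
  rw [← add_div]
  apply div_pos _ hd
  ring_nf
  ring_nf at hns
  nlinarith

lemma re_phiUS (v : ℂ) :
    (phiUS v).re = (2 / Real.pi) *
      Complex.arg ((1 + Complex.I * v) / (1 - Complex.I * v)) := by
  set q := (1 + Complex.I * v) / (1 - Complex.I * v)
  have h : phiUS v = ((-2 / Real.pi : ℝ) : ℂ) * (Complex.I * Complex.log q) := by
    unfold phiUS
    push_cast
    ring
  rw [h]
  simp only [Complex.re_ofReal_mul, Complex.mul_re, Complex.I_re, Complex.I_im,
    Complex.log_im, Complex.ofReal_re, Complex.ofReal_im]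
  ring_nf

lemma abs_re_phiUS_lt {v : ℂ} (hv : ‖v‖ < 1) : |(phiUS v).re| < 1 := by
  rw [re_phiUS]
  have h := Complex.abs_arg_lt_pi_div_two_iff.mpr (Or.inl (re_q_pos hv))
  rw [abs_mul, abs_div]
  rw [abs_of_pos Real.pi_pos, abs_of_pos (by norm_num : (0:ℝ) < 2)]
  calc 2 / Real.pi * |Complex.arg _| < 2 / Real.pi * (Real.pi / 2) := by
        apply mul_lt_mul_of_pos_left h
        positivity
    _ = 1 := by field_simp

lemma phiUS_eq_arctan (v : ℂ) : phiUS v = (4 / (Real.pi : ℂ)) * Complex.arctan v := by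
  unfold phiUS Complex.arctan
  rw [mul_comm v Complex.I]
  ring

lemma phiUS_ofReal_re (r : ℝ) : (phiUS (r : ℂ)).re = 4 / Real.pi * Real.arctan r := by
  rw [phiUS_eq_arctan, ← Complex.ofReal_arctan]
  have : (4 / (Real.pi : ℂ)) = ((4 / Real.pi : ℝ) : ℂ) := by push_cast; ring
  rw [this, ← Complex.ofReal_mul, Complex.ofReal_re]

lemma phiUS_zero : phiUS 0 = 0 := by
  simp [phiUS]

lemma phiUS_diffAt {v : ℂ} (hv : ‖v‖ < 1) : DifferentiableAt ℂ phiUS v := by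
  have hne := denom_ne_zero hv
  have hq : DifferentiableAt ℂ (fun w => (1 + Complex.I * w) / (1 - Complex.I * w)) v := by
    apply DifferentiableAt.div
    · fun_prop
    · fun_prop
    · exact hne
  have hslit : (1 + Complex.I * v) / (1 - Complex.I * v) ∈ Complex.slitPlane :=
    Or.inl (re_q_pos hv)
  exact (hq.clog hslit).const_mul _


/-- sharpness of the harmonic Schwarz lemma. -/
theorem schwarz_harmonic_sharp (z : ℂ) (hz : z ∈ discU) (hz0 : z ≠ 0) :
    ∃ u : ℂ → ℝ, HarmonicOnR u discU ∧
      (∀ w ∈ discU, u w ∈ Set.Ioo (-1 : ℝ) 1) ∧ u 0 = 0 ∧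
      |u z| = (4 / Real.pi) * Real.arctan ‖z‖ := by
  set r := ‖z‖ with hr
  have hr0 : 0 < r := by
    simpa [hr] using norm_pos_iff.mpr hz0
  have hrc : (r : ℂ) ≠ 0 := by exact_mod_cast hr0.ne'
  set c : ℂ := (starRingEnd ℂ) z / (r : ℂ) with hc
  have habsc : ‖c‖ = 1 := by
    rw [hc, norm_div, Complex.norm_conj, Complex.norm_real, Real.norm_eq_abs, abs_of_pos hr0, ← hr,
      div_self hr0.ne']
  have hcz : c * z = (r : ℂ) := by
    rw [hc, div_mul_eq_mul_div, mul_comm, Complex.mul_conj, ← Complex.sq_norm, ← hr]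
    push_cast
    field_simp
  have hmem : ∀ w ∈ discU, ‖c * w‖ < 1 := by
    intro w hw
    rw [norm_mul, habsc, one_mul]; exact hw
  refine ⟨fun w => (phiUS (c * w)).re, ?_, ?_, ?_, ?_⟩
  · apply harmonic_re
    intro w hw
    exact ((phiUS_diffAt (hmem w hw)).comp w
      ((differentiableAt_const c).mul differentiableAt_id)).differentiableWithinAt
  · intro w hw
    exact Set.mem_Ioo.mpr (abs_lt.mp (abs_re_phiUS_lt (hmem w hw)))
  · simp [phiUS_zero]
  · show |(phiUS (c * z)).re| = 4 / Real.pi * Real.arctan r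
    rw [hcz, phiUS_ofReal_re]
    have h1 : 0 ≤ Real.arctan r := by rw [← Real.arctan_zero]; exact Real.arctan_strictMono.monotone hr0.le
    exact abs_of_nonneg (by positivity)
end
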